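/- arXiv:1510.03920 — 2 statements merged into one kernel-verified Lean document; each statement's English description precedes it below -/
import Mathlib

section
/- Let α > γ > 0 and β > 0. Then for every u ≥ 0, ∫_u^∞ (α + β/√v) e^{-(α-γ)v - 2β√v} dv = (√π βγ/(α-γ)^{3/2}) e^{β²/(α-γ)} [erf(√(α-γ)√u + β/√(α-γ)) - 1] + (α/(α-γ)) e^{-(α-γ)u - 2β√u}, where erf(x) = (2/√π)∫_0^x e^{-t²}dt. -/
open MeasureTheory Real Set

/-- The error function `erf x = (2/√π) ∫_0^x e^{-t²} dt`. -/
noncomputable def errorFunction (x : ℝ) : ℝ :=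
  2 / Real.sqrt Real.pi * ∫ t in (0:ℝ)..x, Real.exp (-t ^ 2)

open Filter

lemma erf_hasDerivAt (x : ℝ) :
    HasDerivAt errorFunction (2 / Real.sqrt Real.pi * Real.exp (-x ^ 2)) x := by
  have hcont : Continuous fun t : ℝ => Real.exp (-t ^ 2) := by continuity
  have h := intervalIntegral.integral_hasDerivAt_right
    (hcont.intervalIntegrable 0 x)
    hcont.stronglyMeasurable.stronglyMeasurableAtFilter
    hcont.continuousAt
  exact h.const_mul _

lemma erf_tendsto : Tendsto errorFunction atTop (nhds 1) := by
  have hint : IntegrableOn (fun t : ℝ => Real.exp (-t ^ 2)) (Ioi 0) := by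
    have := (integrable_exp_neg_mul_sq (by norm_num : (0:ℝ) < 1)).integrableOn (s := Ioi 0)
    simpa using this
  have h1 := intervalIntegral_tendsto_integral_Ioi 0 hint tendsto_id
  have h2 : (∫ t in Ioi (0:ℝ), Real.exp (-t ^ 2)) = Real.sqrt Real.pi / 2 := by
    have := integral_gaussian_Ioi 1
    simpa using this
  rw [h2] at h1
  have h3 := h1.const_mul (2 / Real.sqrt Real.pi)
  have hπ : Real.sqrt Real.pi ≠ 0 := by positivity
  have : 2 / Real.sqrt Real.pi * (Real.sqrt Real.pi / 2) = 1 := by field_simp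
  rw [this] at h3
  exact h3

lemma erf_continuous : Continuous errorFunction :=
  continuous_iff_continuousAt.mpr fun x => (erf_hasDerivAt x).continuousAt

lemma sqrt_tendsto_atTop : Tendsto Real.sqrt atTop atTop := by
  apply tendsto_atTop_atTop.mpr
  intro b
  refine ⟨max (b ^ 2) 0, fun a ha => ?_⟩
  have h1 : b ^ 2 ≤ a := le_trans (le_max_left _ _) ha
  calc b ≤ |b| := le_abs_self b
    _ = Real.sqrt (b ^ 2) := (Real.sqrt_sq_eq_abs b).symm
    _ ≤ Real.sqrt a := Real.sqrt_le_sqrt h1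

theorem stmt5 (α β γ u : ℝ) (hγ : 0 < γ) (hαγ : γ < α) (hβ : 0 < β) (hu : 0 ≤ u) :
    ∫ v in Ioi u, (α + β / Real.sqrt v) * Real.exp (-(α - γ) * v - 2 * β * Real.sqrt v)
      = Real.sqrt Real.pi * β * γ / (α - γ) ^ ((3:ℝ) / 2) * Real.exp (β ^ 2 / (α - γ)) *
          (errorFunction (Real.sqrt (α - γ) * Real.sqrt u + β / Real.sqrt (α - γ)) - 1)
        + α / (α - γ) * Real.exp (-(α - γ) * u - 2 * β * Real.sqrt u) := by
  have hc : 0 < α - γ := sub_pos.mpr hαγ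
  have hα : 0 < α := hγ.trans hαγ
  have hsc : 0 < Real.sqrt (α - γ) := Real.sqrt_pos.mpr hc
  have hπ : 0 < Real.sqrt Real.pi := Real.sqrt_pos.mpr Real.pi_pos
  have h1 : Real.sqrt (α - γ) ^ 2 = α - γ := Real.sq_sqrt hc.le
  have c32 : (α - γ) ^ ((3:ℝ)/2) = Real.sqrt (α - γ) ^ 3 := by
    rw [show Real.sqrt (α - γ) = (α - γ) ^ ((1:ℝ)/2) from Real.sqrt_eq_rpow _,
      ← Real.rpow_natCast ((α - γ) ^ ((1:ℝ)/2)) 3, ← Real.rpow_mul hc.le]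
    norm_num
  set K : ℝ := Real.sqrt Real.pi * β * γ / (α - γ) ^ ((3:ℝ)/2) * Real.exp (β ^ 2 / (α - γ)) with hK
  have key := integral_Ioi_of_hasDerivAt_of_nonneg
      (g := fun v => -(K * errorFunction (Real.sqrt (α - γ) * Real.sqrt v + β / Real.sqrt (α - γ)))
            - α / (α - γ) * Real.exp (-(α - γ) * v - 2 * β * Real.sqrt v))
      (g' := fun v => (α + β / Real.sqrt v) * Real.exp (-(α - γ) * v - 2 * β * Real.sqrt v))
      (a := u) (l := -K) ?_ ?_ ?_ ?_
  · rw [key]; ring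
  · -- continuity
    apply Continuous.continuousWithinAt
    apply Continuous.sub
    · exact (continuous_const.mul (erf_continuous.comp (by continuity))).neg
    · exact continuous_const.mul (Real.continuous_exp.comp (by continuity))
  · -- derivative
    intro x hx
    have hxpos : 0 < x := lt_of_le_of_lt hu hx
    have hsx : 0 < Real.sqrt x := Real.sqrt_pos.mpr hxpos
    have h2 : Real.sqrt x ^ 2 = x := Real.sq_sqrt hxpos.le
    have hder1 : HasDerivAt Real.sqrt (1 / (2 * Real.sqrt x)) x := Real.hasDerivAt_sqrt hxpos.ne'
    have hs : HasDerivAt (fun v => Real.sqrt (α - γ) * Real.sqrt v + β / Real.sqrt (α - γ))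
        (Real.sqrt (α - γ) * (1 / (2 * Real.sqrt x))) x := (hder1.const_mul _).add_const _
    have herf := (erf_hasDerivAt
      (Real.sqrt (α - γ) * Real.sqrt x + β / Real.sqrt (α - γ))).comp x hs
    have hin : HasDerivAt (fun v => -(α - γ) * v - 2 * β * Real.sqrt v)
        (-(α - γ) * 1 - 2 * β * (1 / (2 * Real.sqrt x))) x :=
      ((hasDerivAt_id x).const_mul (-(α - γ))).sub (hder1.const_mul (2 * β))
    have hE := hin.exp
    have hF := ((herf.const_mul K).neg).sub (hE.const_mul (α / (α - γ)))
    refine hF.congr_deriv (Eq.symm ?_)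
    have hsq : Real.exp (-(Real.sqrt (α - γ) * Real.sqrt x + β / Real.sqrt (α - γ)) ^ 2)
        = Real.exp (-(α - γ) * x - 2 * β * Real.sqrt x) * Real.exp (-(β ^ 2 / (α - γ))) := by
      rw [← Real.exp_add]
      congr 1
      have expand : (Real.sqrt (α - γ) * Real.sqrt x + β / Real.sqrt (α - γ)) ^ 2
          = Real.sqrt (α - γ) ^ 2 * Real.sqrt x ^ 2
            + 2 * β * Real.sqrt x * (Real.sqrt (α - γ) / Real.sqrt (α - γ))
            + β ^ 2 / Real.sqrt (α - γ) ^ 2 := by ring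
      rw [expand, div_self hsc.ne', h1, h2]; ring
    simp only [hsq, hK, c32, Real.exp_neg]
    field_simp
    ring_nf
    linear_combination (-(γ * β)) * h1
  · -- nonneg
    intro x hx
    have hxpos : 0 < x := lt_of_le_of_lt hu hx
    have : 0 ≤ α + β / Real.sqrt x :=
      add_nonneg hα.le (div_nonneg hβ.le (Real.sqrt_nonneg x))
    exact mul_nonneg this (Real.exp_nonneg _)
  · -- tendsto
    have hs1 : Tendsto (fun v : ℝ => Real.sqrt (α - γ) * Real.sqrt v + β / Real.sqrt (α - γ))
        atTop atTop :=
      tendsto_atTop_add_const_right _ _ (sqrt_tendsto_atTop.const_mul_atTop hsc)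
    have h2 : Tendsto (fun v : ℝ => errorFunction
        (Real.sqrt (α - γ) * Real.sqrt v + β / Real.sqrt (α - γ))) atTop (nhds 1) :=
      erf_tendsto.comp hs1
    have h3' : Tendsto (fun v : ℝ => (α - γ) * v + 2 * β * Real.sqrt v) atTop atTop :=
      Filter.Tendsto.atTop_add_atTop (tendsto_id.const_mul_atTop hc)
        (sqrt_tendsto_atTop.const_mul_atTop (by positivity))
    have h3 : Tendsto (fun v : ℝ => -(α - γ) * v - 2 * β * Real.sqrt v) atTop atBot := by
      have h := tendsto_neg_atTop_atBot.comp h3'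
      exact Filter.Tendsto.congr (fun v => by simp only [Function.comp_apply, id_eq]; ring) h
    have h4 : Tendsto (fun v : ℝ => Real.exp (-(α - γ) * v - 2 * β * Real.sqrt v))
        atTop (nhds 0) := Real.tendsto_exp_atBot.comp h3
    have := ((h2.const_mul K).neg).sub (h4.const_mul (α / (α - γ)))
    simpa using this
end

section
/- Let α > γ > 0, β > 0, and set ψ(u) = [ (√π βγ/(α-γ)^{3/2}) e^{β²/(α-γ)} (erf((√(α-γ)√u + β/√(α-γ)) ) - 1) + (α/(α-γ)) e^{-(α-γ)u - 2β√u} ] / [ (√π βγ/(α-γ)^{3/2}) e^{β²/(α-γ)} (erf(β/√(α-γ)) - 1) + α/(α-γ) ]. Then ψ(0) = 1, ψ is strictly decreasing on [0,∞), and ψ(u) → 0 as u → ∞. -/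
open Filter Real Set

/-! Substituting `x = √(α - γ) √u + x₀` with `x₀ = β / √(α - γ)`, which increases from `x₀` to `∞`,
turns the numerator of `ψ u` into a positive multiple of `g x = α e^{-x²} - √π γ x₀ erfc x` and the
denominator into the same multiple of `g x₀`. As `g' x = -2 e^{-x²} (α x - γ x₀) < 0` for `x ≥ x₀`
and `g x → 0`, the function `g` is strictly decreasing and positive on `[x₀, ∞)`. -/

open MeasureTheory Topology

theorem hasDerivAt_errorFunction (x : ℝ) :
    HasDerivAt errorFunction (2 / √π * exp (-x ^ 2)) x := by
  have hcont : Continuous fun t : ℝ => exp (-t ^ 2) := by fun_prop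
  exact (intervalIntegral.integral_hasDerivAt_right (hcont.intervalIntegrable _ _)
    (hcont.stronglyMeasurableAtFilter _ _) hcont.continuousAt).const_mul _

theorem tendsto_errorFunction_atTop : Tendsto errorFunction atTop (𝓝 1) := by
  have hint : IntegrableOn (fun t : ℝ => exp (-t ^ 2)) (Ioi 0) := by
    simpa using (integrable_exp_neg_mul_sq one_pos).integrableOn
  have h := (intervalIntegral_tendsto_integral_Ioi 0 hint tendsto_id).const_mul (2 / √π)
  have hπ : √π ≠ 0 := by positivity
  rw [show ∫ t in Ioi (0:ℝ), exp (-t ^ 2) = √π / 2 by simpa using integral_gaussian_Ioi 1,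
    show 2 / √π * (√π / 2) = 1 by field_simp] at h
  exact h

theorem StrictAntiOn.pos_of_tendsto_atTop_zero {f : ℝ → ℝ} {c : ℝ} (hf : StrictAntiOn f (Ici c))
    (hlim : Tendsto f atTop (𝓝 0)) {x : ℝ} (hx : c ≤ x) : 0 < f x := by
  have hx1 : c ≤ x + 1 := by linarith
  have : 0 ≤ f (x + 1) := le_of_tendsto hlim <| eventually_atTop.2
    ⟨x + 1, fun y hy => hf.antitoneOn hx1 (hx1.trans hy) hy⟩
  exact this.trans_lt (hf hx hx1 (by linarith))

noncomputable def ruinKernel (p q x : ℝ) : ℝ :=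
  p * exp (-x ^ 2) + √π * q * (errorFunction x - 1)

theorem hasDerivAt_ruinKernel (p q x : ℝ) :
    HasDerivAt (ruinKernel p q) (-2 * exp (-x ^ 2) * (p * x - q)) x := by
  have hsq : HasDerivAt (fun x : ℝ => -x ^ 2) (-(2 * x)) x := by
    simpa using (hasDerivAt_pow 2 x).fun_neg
  refine ((hsq.exp.const_mul p).fun_add
    (((hasDerivAt_errorFunction x).sub_const 1).const_mul (√π * q))).congr_deriv ?_
  have hπ : √π ≠ 0 := by positivity
  field_simp
  ring

theorem strictAntiOn_ruinKernel {p q c : ℝ} (hp : 0 ≤ p) (hq : q < p * c) :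
    StrictAntiOn (ruinKernel p q) (Ici c) := by
  refine strictAntiOn_of_hasDerivWithinAt_neg (convex_Ici c)
    (fun x _ => (hasDerivAt_ruinKernel p q x).continuousAt.continuousWithinAt)
    (fun x _ => (hasDerivAt_ruinKernel p q x).hasDerivWithinAt) fun x hx => ?_
  rw [interior_Ici, mem_Ioi] at hx
  have : q < p * x := hq.trans_le (by gcongr)
  have := exp_pos (-x ^ 2)
  nlinarith

theorem tendsto_ruinKernel_atTop (p q : ℝ) : Tendsto (ruinKernel p q) atTop (𝓝 0) := by
  have hexp : Tendsto (fun x : ℝ => exp (-x ^ 2)) atTop (𝓝 0) :=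
    tendsto_exp_atBot.comp (tendsto_neg_atTop_atBot.comp (tendsto_pow_atTop two_ne_zero))
  have h := (hexp.const_mul p).add ((tendsto_errorFunction_atTop.sub_const 1).const_mul (√π * q))
  rwa [mul_zero, sub_self, mul_zero, add_zero] at h

theorem ruin_numerator_eq {a u : ℝ} (α β γ : ℝ) (ha : 0 < a) (hu : 0 ≤ u) :
    √π * β * γ / a ^ ((3:ℝ) / 2) * exp (β ^ 2 / a) * (errorFunction (√a * √u + β / √a) - 1)
      + α / a * exp (-a * u - 2 * β * √u)
      = exp (β ^ 2 / a) / a * ruinKernel α (γ * (β / √a)) (√a * √u + β / √a) := by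
  have hsa : 0 < √a := sqrt_pos.2 ha
  have h32 : a ^ ((3:ℝ) / 2) = a * √a := by
    rw [show (3:ℝ) / 2 = 1 + 1 / 2 by norm_num, rpow_add ha, rpow_one, sqrt_eq_rpow]
  have hsq : (√a * √u + β / √a) ^ 2 = a * u + 2 * β * √u + β ^ 2 / a := by
    rw [add_sq, mul_pow, div_pow, sq_sqrt ha.le, sq_sqrt hu]
    field_simp
  have hexp : exp (-a * u - 2 * β * √u) = exp (β ^ 2 / a) * exp (-(√a * √u + β / √a) ^ 2) := by
    rw [← exp_add, hsq]
    ring_nf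
  rw [ruinKernel, hexp, h32]
  field_simp
  ring

theorem ruin_denominator_eq {a : ℝ} (α β γ : ℝ) (ha : 0 < a) :
    √π * β * γ / a ^ ((3:ℝ) / 2) * exp (β ^ 2 / a) * (errorFunction (β / √a) - 1) + α / a
      = exp (β ^ 2 / a) / a * ruinKernel α (γ * (β / √a)) (β / √a) := by
  simpa using ruin_numerator_eq α β γ ha le_rfl

theorem stmt16 (α β γ : ℝ) (hγ : 0 < γ) (hαγ : γ < α) (hβ : 0 < β) :
    let ψ : ℝ → ℝ := fun u =>
      (Real.sqrt Real.pi * β * γ / (α - γ) ^ ((3:ℝ) / 2) * Real.exp (β ^ 2 / (α - γ)) *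
          (errorFunction (Real.sqrt (α - γ) * Real.sqrt u + β / Real.sqrt (α - γ)) - 1)
        + α / (α - γ) * Real.exp (-(α - γ) * u - 2 * β * Real.sqrt u)) /
      (Real.sqrt Real.pi * β * γ / (α - γ) ^ ((3:ℝ) / 2) * Real.exp (β ^ 2 / (α - γ)) *
          (errorFunction (β / Real.sqrt (α - γ)) - 1)
        + α / (α - γ))
    ψ 0 = 1 ∧ StrictAntiOn ψ (Ici 0) ∧ Tendsto ψ atTop (nhds 0) := by
  intro ψ
  have ha : 0 < α - γ := sub_pos.2 hαγ
  have hψ : ∀ u, 0 ≤ u → ψ u = ruinKernel α (γ * (β / √(α - γ))) (√(α - γ) * √u + β / √(α - γ))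
      / ruinKernel α (γ * (β / √(α - γ))) (β / √(α - γ)) := fun u hu => by
    simp only [ψ]
    rw [ruin_numerator_eq α β γ ha hu, ruin_denominator_eq α β γ ha,
      mul_div_mul_left _ _ (by positivity)]
  set x₀ := β / √(α - γ)
  set g := ruinKernel α (γ * x₀)
  have hsa : 0 < √(α - γ) := sqrt_pos.2 ha
  have hg_anti : StrictAntiOn g (Ici x₀) := strictAntiOn_ruinKernel (hγ.trans hαγ).le (by gcongr)
  have hg_lim : Tendsto g atTop (𝓝 0) := tendsto_ruinKernel_atTop _ _
  have hgx₀ : 0 < g x₀ := hg_anti.pos_of_tendsto_atTop_zero hg_lim le_rfl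
  have hx_mono : StrictMonoOn (fun u => √(α - γ) * √u + x₀) (Ici 0) :=
    fun u hu v hv huv => by simpa using mul_lt_mul_of_pos_left (strictMonoOn_sqrt hu hv huv) hsa
  have hx_maps : MapsTo (fun u => √(α - γ) * √u + x₀) (Ici 0) (Ici x₀) :=
    fun u _ => le_add_of_nonneg_left (by positivity : 0 ≤ √(α - γ) * √u)
  have hx_lim : Tendsto (fun u => √(α - γ) * √u + x₀) atTop atTop :=
    tendsto_atTop_add_const_right _ _ (tendsto_sqrt_atTop.const_mul_atTop hsa)
  refine ⟨by rw [hψ 0 le_rfl, sqrt_zero, mul_zero, zero_add, div_self hgx₀.ne'], ?_, ?_⟩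
  · intro u hu v hv huv
    rw [hψ u hu, hψ v hv]
    exact div_lt_div_of_pos_right (hg_anti (hx_maps hu) (hx_maps hv) (hx_mono hu hv huv)) hgx₀
  · rw [← zero_div (g x₀)]
    exact ((hg_lim.comp hx_lim).div_const _).congr'
      (eventually_ge_atTop 0 |>.mono fun u hu => (hψ u hu).symm)
end
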